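/- For any f ∈ ℂ[s,t] in the module Ω(λ,α) (regarded as a W(2,2)-module where all W_n act by zero), the identity W_n·f = 0 holds for all n, while in any simple tensor product module T = ⊗_{k=1}^m Ω(λ_k,α_k,h_k) ⊗ V (m ≥ 1, λ_k pairwise distinct nonzero, α_k nonzero) and any nonzero v ∈ V there exists n with W_n·(1⊗⋯⊗1⊗v) ≠ 0. Hence T is not isomorphic to Ω(λ,α) for any λ ∈ ℂ*, α ∈ ℂ. -/
import Mathlib


open Polynomial TensorProduct

/-- Basis index set for the W-algebra W(2,2): elements `L n`, `W n` (n ∈ ℤ) and a central `C`. -/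
inductive WIdx : Type
  | L : ℤ → WIdx
  | W : ℤ → WIdx
  | C : WIdx

/-- The central-term coefficient δ_{m+n,0}·(m³−m)/12. -/
noncomputable def deltaC (m n : ℤ) : ℂ := if m + n = 0 then ((m : ℂ)^3 - (m : ℂ))/12 else 0

/-- A representation of the W-algebra W(2,2) on a complex vector space `M`,
given by operators for each basis element satisfying the bracket relations. -/
structure WRep (M : Type*) [AddCommGroup M] [Module ℂ M] where
  ρ : WIdx → Module.End ℂ M
  rel_LL : ∀ m n : ℤ, ρ (.L m) * ρ (.L n) - ρ (.L n) * ρ (.L m)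
      = ((n : ℂ) - (m : ℂ)) • ρ (.L (m + n)) + deltaC m n • ρ .C
  rel_LW : ∀ m n : ℤ, ρ (.L m) * ρ (.W n) - ρ (.W n) * ρ (.L m)
      = ((n : ℂ) - (m : ℂ)) • ρ (.W (m + n)) + deltaC m n • ρ .C
  rel_WW : ∀ m n : ℤ, ρ (.W m) * ρ (.W n) = ρ (.W n) * ρ (.W m)
  rel_C : ∀ x, ρ .C * ρ x = ρ x * ρ .C

/-- A subspace invariant under all the operators of a representation. -/
def WInvariant {M : Type*} [AddCommGroup M] [Module ℂ M]
    (ρ : WIdx → Module.End ℂ M) (N : Submodule ℂ M) : Prop :=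
  ∀ b : WIdx, ∀ x ∈ N, ρ b x ∈ N

/-- Simplicity: the module is nonzero and has no nonzero proper invariant subspaces. -/
def WSimple {M : Type*} [AddCommGroup M] [Module ℂ M]
    (ρ : WIdx → Module.End ℂ M) : Prop :=
  (∃ x : M, x ≠ 0) ∧ ∀ N : Submodule ℂ M, WInvariant ρ N → N = ⊥ ∨ N = ⊤

/-- Module homomorphisms: linear maps intertwining the two actions. -/
def WHom {M N : Type*} [AddCommGroup M] [Module ℂ M] [AddCommGroup N] [Module ℂ N]
    (ρM : WIdx → Module.End ℂ M) (ρN : WIdx → Module.End ℂ N) (φ : M →ₗ[ℂ] N) : Prop :=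
  ∀ b : WIdx, ∀ x : M, φ (ρM b x) = ρN b (φ x)

/-- Restricted module: every vector is killed by `L n` and `W n` for all sufficiently large `n`. -/
def WRestricted {M : Type*} [AddCommGroup M] [Module ℂ M]
    (ρ : WIdx → Module.End ℂ M) : Prop :=
  ∀ x : M, ∃ N : ℤ, ∀ n : ℤ, N ≤ n → ρ (.L n) x = 0 ∧ ρ (.W n) x = 0

/-- The substitution operator f(s) ↦ f(s − n) on ℂ[s]. -/
noncomputable def shiftMap (n : ℤ) : Module.End ℂ (Polynomial ℂ) :=
  (Polynomial.aeval (Polynomial.X - Polynomial.C (n : ℂ))).toLinearMap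

/-- The action of W(2,2) on Ω(λ,α) = ℂ[s]:
`L n · f(s) = λⁿ (s − nα) f(s − n)`, `W n` and `C` act by zero. -/
noncomputable def omegaRho (lam alpha : ℂ) : WIdx → Module.End ℂ (Polynomial ℂ)
  | .L n => (lam ^ n) •
      ((LinearMap.mulLeft ℂ (Polynomial.X - Polynomial.C ((n : ℂ) * alpha))) ∘ₗ shiftMap n)
  | .W _ => 0
  | .C => 0

/-- g(t) = (h(t) − h(α))/(t − α) as an exact polynomial quotient. -/
noncomputable def gPoly (alpha : ℂ) (h : Polynomial ℂ) : Polynomial ℂ :=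
  (h - Polynomial.C (h.eval alpha)) /ₘ (Polynomial.X - Polynomial.C alpha)

/-- F(f) = g·f − f′. -/
noncomputable def Fmap (alpha : ℂ) (h : Polynomial ℂ) : Module.End ℂ (Polynomial ℂ) :=
  LinearMap.mulLeft ℂ (gPoly alpha h) - (Polynomial.derivative : Polynomial ℂ →ₗ[ℂ] Polynomial ℂ)

/-- G(f) = t·F(f) + h(α)·f. -/
noncomputable def Gmap (alpha : ℂ) (h : Polynomial ℂ) : Module.End ℂ (Polynomial ℂ) :=
  (LinearMap.mulLeft ℂ (Polynomial.X : Polynomial ℂ)) ∘ₗ Fmap alpha h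
    + (h.eval alpha) • (LinearMap.id : Polynomial ℂ →ₗ[ℂ] Polynomial ℂ)

/-- The action of W(2,2) on Ω(λ,α,h) = ℂ[s,t], realized as ℂ[s] ⊗ ℂ[t]:
`L n·(s^p t^q) = λⁿ(s−n)^p (s t^q + n G(t^q) − n²α F(t^q))`,
`W n·(s^p t^q) = λⁿ(t−nα)(s−n)^p t^q`, `C` acts by zero. -/
noncomputable def omegaHRho (lam alpha : ℂ) (h : Polynomial ℂ) :
    WIdx → Module.End ℂ (TensorProduct ℂ (Polynomial ℂ) (Polynomial ℂ))
  | .L n => (lam ^ n) •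
      (TensorProduct.map ((LinearMap.mulLeft ℂ (Polynomial.X : Polynomial ℂ)) ∘ₗ shiftMap n) LinearMap.id
        + (n : ℂ) • TensorProduct.map (shiftMap n) (Gmap alpha h)
        - ((n : ℂ)^2 * alpha) • TensorProduct.map (shiftMap n) (Fmap alpha h))
  | .W n => (lam ^ n) •
      TensorProduct.map (shiftMap n)
        (LinearMap.mulLeft ℂ (Polynomial.X - Polynomial.C ((n : ℂ) * alpha)))
  | .C => 0
/-- Variables s₁,…,s_m (left) and t₁,…,t_m (right). -/
abbrev WVars (m : ℕ) := Fin m ⊕ Fin m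

/-- Linear map on multivariate polynomials defined by its values on monomials. -/
noncomputable def mkLin {σ : Type*} {M : Type*} [AddCommGroup M] [Module ℂ M]
    (φ : (σ →₀ ℕ) → M) : MvPolynomial σ ℂ →ₗ[ℂ] M :=
  ((MvPolynomial.basisMonomials σ ℂ).constr ℂ) φ

/-- The part of the monomial `d` in the variables other than s_k, t_k. -/
noncomputable def others {m : ℕ} (k : Fin m) (d : WVars m →₀ ℕ) : MvPolynomial (WVars m) ℂ :=
  MvPolynomial.monomial ((d.erase (Sum.inl k)).erase (Sum.inr k)) 1

/-- Action of `W n` on the k-th tensor factor Ω(λ_k,α_k,h_k) inside ℂ[s₁,…,s_m,t₁,…,t_m]. -/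
noncomputable def siteW {m : ℕ} (lam alpha : Fin m → ℂ) (n : ℤ) (k : Fin m) :
    Module.End ℂ (MvPolynomial (WVars m) ℂ) :=
  mkLin fun d => (lam k ^ n) •
    ((MvPolynomial.X (Sum.inr k) - MvPolynomial.C ((n : ℂ) * alpha k)) *
      (MvPolynomial.X (Sum.inl k) - MvPolynomial.C (n : ℂ)) ^ (d (Sum.inl k)) *
      MvPolynomial.X (Sum.inr k) ^ (d (Sum.inr k)) * others k d)

/-- Action of `L n` on the k-th tensor factor Ω(λ_k,α_k,h_k) inside ℂ[s₁,…,s_m,t₁,…,t_m]. -/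
noncomputable def siteL {m : ℕ} (lam alpha : Fin m → ℂ) (h : Fin m → Polynomial ℂ)
    (n : ℤ) (k : Fin m) : Module.End ℂ (MvPolynomial (WVars m) ℂ) :=
  mkLin fun d => (lam k ^ n) •
    ((MvPolynomial.X (Sum.inl k) - MvPolynomial.C (n : ℂ)) ^ (d (Sum.inl k)) * others k d *
      (MvPolynomial.X (Sum.inl k) * MvPolynomial.X (Sum.inr k) ^ (d (Sum.inr k))
        + (n : ℂ) • Polynomial.aeval (MvPolynomial.X (Sum.inr k) : MvPolynomial (WVars m) ℂ)
            (Gmap (alpha k) (h k) (Polynomial.X ^ (d (Sum.inr k))))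
        - ((n : ℂ)^2 * alpha k) • Polynomial.aeval (MvPolynomial.X (Sum.inr k) : MvPolynomial (WVars m) ℂ)
            (Fmap (alpha k) (h k) (Polynomial.X ^ (d (Sum.inr k))))))

/-- The diagonal action of W(2,2) on the tensor product module
T = Ω(λ₁,α₁,h₁) ⊗ ⋯ ⊗ Ω(λ_m,α_m,h_m) ⊗ V, with the polynomial factors realized as
ℂ[s₁,…,s_m,t₁,…,t_m] and `ρV` the action on `V`. -/
noncomputable def bigRho {m : ℕ} {V : Type*} [AddCommGroup V] [Module ℂ V]
    (lam alpha : Fin m → ℂ) (h : Fin m → Polynomial ℂ) (ρV : WIdx → Module.End ℂ V) :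
    WIdx → Module.End ℂ (TensorProduct ℂ (MvPolynomial (WVars m) ℂ) V)
  | .L n => (∑ k : Fin m, TensorProduct.map (siteL lam alpha h n k) LinearMap.id)
      + TensorProduct.map LinearMap.id (ρV (.L n))
  | .W n => (∑ k : Fin m, TensorProduct.map (siteW lam alpha n k) LinearMap.id)
      + TensorProduct.map LinearMap.id (ρV (.W n))
  | .C => TensorProduct.map LinearMap.id (ρV .C)

/-- Carrier of the tensor product module T = Ω(λ₁,α₁,h₁) ⊗ ⋯ ⊗ Ω(λ_m,α_m,h_m) ⊗ V. -/
abbrev TMod (m : ℕ) (V : Type*) [AddCommGroup V] [Module ℂ V] :=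
  TensorProduct ℂ (MvPolynomial (WVars m) ℂ) V


section AuxLemmas
lemma mkLin_monomial {σ : Type*} {M : Type*} [AddCommGroup M] [Module ℂ M]
    (φ : (σ →₀ ℕ) → M) (d : σ →₀ ℕ) :
    mkLin φ (MvPolynomial.monomial d 1) = φ d := by
  have := (MvPolynomial.basisMonomials σ ℂ).constr_basis ℂ φ d
  rwa [show (MvPolynomial.basisMonomials σ ℂ) d = MvPolynomial.monomial d 1 by
    rw [MvPolynomial.coe_basisMonomials]] at this

lemma mkLin_one {σ : Type*} {M : Type*} [AddCommGroup M] [Module ℂ M]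
    (φ : (σ →₀ ℕ) → M) : mkLin φ 1 = φ 0 := by
  have h1 : (1 : MvPolynomial σ ℂ) = MvPolynomial.monomial 0 1 := by
    simp [MvPolynomial.monomial_zero']
  rw [h1, mkLin_monomial]

lemma siteW_one {m : ℕ} (lam alpha : Fin m → ℂ) (n : ℤ) (k : Fin m) :
    siteW lam alpha n k 1
      = (lam k ^ n) • (MvPolynomial.X (Sum.inr k) - MvPolynomial.C ((n : ℂ) * alpha k)) := by
  rw [siteW, mkLin_one]
  simp [others, Finsupp.erase_zero, MvPolynomial.monomial_zero']

lemma tmul_ne_zero_of_coeff {m : ℕ} {V : Type*} [AddCommGroup V] [Module ℂ V]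
    (P : MvPolynomial (WVars m) ℂ) (v : V) (d : WVars m →₀ ℕ)
    (hc : MvPolynomial.coeff d P ≠ 0) (hv : v ≠ 0) :
    P ⊗ₜ[ℂ] v ≠ 0 := by
  intro h0
  have h1 := congrArg (fun x => (TensorProduct.lid ℂ V)
      ((LinearMap.rTensor V (MvPolynomial.lcoeff ℂ d)) x)) h0
  simp only [LinearMap.rTensor_tmul, TensorProduct.lid_tmul, map_zero] at h1
  rcases smul_eq_zero.mp h1 with h | h
  · exact hc h
  · exact hv h
end AuxLemmas

/-- On Ω(λ,α) every W_n acts by zero, while on the simple tensor product module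
T = ⊗_k Ω(λ_k,α_k,h_k) ⊗ V (m ≥ 1, λ_k pairwise distinct in ℂ*, α_k ∈ ℂ*) each nonzero
1⊗⋯⊗1⊗v is not killed by all W_n; hence T ≇ Ω(λ,α) for any λ ∈ ℂ*, α ∈ ℂ. -/

theorem tensor_not_iso_omega {m : ℕ} {V : Type*} [AddCommGroup V] [Module ℂ V]
    (hm : 1 ≤ m)
    (lam alpha : Fin m → ℂ) (h : Fin m → Polynomial ℂ)
    (hlam : ∀ k, lam k ≠ 0) (hinj : Function.Injective lam) (halpha : ∀ k, alpha k ≠ 0)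
    (R : WRep V) (hres : WRestricted R.ρ) (hsimp : WSimple R.ρ) :
    (∀ (lam0 alpha0 : ℂ) (n : ℤ) (f : Polynomial ℂ), omegaRho lam0 alpha0 (.W n) f = 0) ∧
    (∀ v : V, v ≠ 0 → ∃ n : ℤ,
      bigRho lam alpha h R.ρ (.W n) ((1 : MvPolynomial (WVars m) ℂ) ⊗ₜ[ℂ] v) ≠ 0) ∧
    (∀ lam0 alpha0 : ℂ, lam0 ≠ 0 →
      ¬ ∃ φ : TMod m V ≃ₗ[ℂ] Polynomial ℂ,
          ∀ (b : WIdx) (x : TMod m V),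
            φ (bigRho lam alpha h R.ρ b x) = omegaRho lam0 alpha0 b (φ x)) := by

  classical
  have part1 : ∀ (lam0 alpha0 : ℂ) (n : ℤ) (f : Polynomial ℂ),
      omegaRho lam0 alpha0 (.W n) f = 0 := by
    intro lam0 alpha0 n f; rfl
  have part2 : ∀ v : V, v ≠ 0 → ∃ n : ℤ,
      bigRho lam alpha h R.ρ (.W n) ((1 : MvPolynomial (WVars m) ℂ) ⊗ₜ[ℂ] v) ≠ 0 := by
    intro v hv
    obtain ⟨N, hN⟩ := hres v
    refine ⟨N, ?_⟩
    have hWv : R.ρ (.W N) v = 0 := (hN N le_rfl).2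
    have key : bigRho lam alpha h R.ρ (.W N) ((1 : MvPolynomial (WVars m) ℂ) ⊗ₜ[ℂ] v)
        = (∑ k : Fin m, (lam k ^ N) •
            (MvPolynomial.X (Sum.inr k) - MvPolynomial.C ((N : ℂ) * alpha k))) ⊗ₜ[ℂ] v := by
      show (∑ k : Fin m, TensorProduct.map (siteW lam alpha N k) LinearMap.id)
          ((1 : MvPolynomial (WVars m) ℂ) ⊗ₜ[ℂ] v)
          + TensorProduct.map LinearMap.id (R.ρ (.W N))
            ((1 : MvPolynomial (WVars m) ℂ) ⊗ₜ[ℂ] v) = _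
      rw [TensorProduct.map_tmul, LinearMap.id_apply, hWv, TensorProduct.tmul_zero, add_zero,
        LinearMap.sum_apply]
      rw [Finset.sum_congr rfl fun k (_ : k ∈ Finset.univ) => by
        rw [TensorProduct.map_tmul, LinearMap.id_apply, siteW_one]]
      rw [← TensorProduct.sum_tmul]
    rw [key]
    set k0 : Fin m := ⟨0, hm⟩
    refine tmul_ne_zero_of_coeff _ v (Finsupp.single (Sum.inr k0) 1) ?_ hv
    have hcoef : MvPolynomial.coeff (Finsupp.single (Sum.inr k0 : WVars m) 1)
        (∑ k : Fin m, (lam k ^ N) •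
          (MvPolynomial.X (Sum.inr k) - MvPolynomial.C ((N : ℂ) * alpha k)
            : MvPolynomial (WVars m) ℂ))
        = lam k0 ^ N := by
      rw [MvPolynomial.coeff_sum]
      have : ∀ k : Fin m, MvPolynomial.coeff (Finsupp.single (Sum.inr k0 : WVars m) 1)
          ((lam k ^ N) • (MvPolynomial.X (Sum.inr k)
            - MvPolynomial.C ((N : ℂ) * alpha k) : MvPolynomial (WVars m) ℂ))
          = if k = k0 then lam k0 ^ N else 0 := by
        intro k
        rw [MvPolynomial.coeff_smul, MvPolynomial.coeff_sub, MvPolynomial.coeff_C,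
          MvPolynomial.coeff_X']
        have hne : ¬ ((0 : WVars m →₀ ℕ) = Finsupp.single (Sum.inr k0 : WVars m) 1) := by
          intro hcontra
          exact one_ne_zero (Finsupp.single_eq_zero.mp hcontra.symm)
        by_cases hk : k = k0
        · subst hk; simp [hne]
        · have : (Finsupp.single (Sum.inr k : WVars m) 1)
              ≠ Finsupp.single (Sum.inr k0 : WVars m) 1 := by
            intro hcontra
            exact hk (Sum.inr.inj (Finsupp.single_left_injective one_ne_zero hcontra))
          simp [this, hne, hk]
      rw [Finset.sum_congr rfl fun k _ => this k]
      simp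
    rw [hcoef]
    exact zpow_ne_zero _ (hlam k0)
  refine ⟨part1, part2, ?_⟩
  rintro lam0 alpha0 hlam0 ⟨φ, hφ⟩
  obtain ⟨v, hv⟩ := hsimp.1
  obtain ⟨n, hn⟩ := part2 v hv
  apply hn
  have h1 := hφ (.W n) ((1 : MvPolynomial (WVars m) ℂ) ⊗ₜ[ℂ] v)
  rw [part1] at h1
  exact (LinearEquiv.map_eq_zero_iff φ).mp h1
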